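/- Let ∇̂ be a connection in a projective class on M̄ which is smooth up to the boundary, and let ρ be a local defining function for ∂M. Then: (a) for any projectively equivalent connection ∇̃ = ∇̂ + Υ (Υ a one-form smooth up to the boundary), the restrictions of ∇̂_a ρ_b and ∇̃_a ρ_b to T∂M × T∂M coincide; and (b) for any other defining function ρ̃ = e^f ρ with f smooth, the restriction of ∇̂_a ρ̃_b to T∂M × T∂M equals e^f times the restriction of ∇̂_a ρ_b, hence is conformal to it. Consequently the conformal class of the restriction of ∇̂_a ρ_b to T∂M (the projective second fundamental form) depends only on the projective structure on M̄. -/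

import Mathlib

/-!
Local-coordinate formalization of projective compactness (Čap–Gover,
"Projective compactness and conformal boundaries").  All statements are
formulated in a local coordinate patch: the manifold with boundary
`M̄ = M ∪ ∂M` is modelled by subsets of `ℝ^{n+1}`, tensors are given by their
component functions, and affine connections by their Christoffel symbols.
-/

noncomputable section

open Set

/-- Points of the local coordinate model `ℝ^{n+1}` of an `(n+1)`-dimensional
manifold with boundary. -/
abbrev Pt (n : ℕ) : Type := EuclideanSpace ℝ (Fin (n + 1))

/-- The `i`-th standard basis vector of the model space. -/
def eb (n : ℕ) (i : Fin (n + 1)) : Pt n := EuclideanSpace.single i (1 : ℝ)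

/-- A local model of a smooth manifold `M̄` with boundary `∂M` and interior `M`. -/
structure MfldBdry (n : ℕ) where
  /-- the whole manifold `M̄` -/
  Mbar : Set (Pt n)
  /-- the interior `M` -/
  Mint : Set (Pt n)
  /-- the boundary `∂M` -/
  Bd : Set (Pt n)
  union_eq : Mbar = Mint ∪ Bd
  disj : Disjoint Mint Bd
  open_int : IsOpen Mint
  bd_limit : Bd ⊆ closure Mint

/-- `f`, given on `s`, admits a smooth extension to `t`. -/
def ExtSmooth {n : ℕ} {F : Type*} [NormedAddCommGroup F] [NormedSpace ℝ F]
    (f : Pt n → F) (s t : Set (Pt n)) : Prop :=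
  ∃ g : Pt n → F, ContDiffOn ℝ (⊤ : ℕ∞) g t ∧ ∀ x ∈ s, g x = f x

/-- An affine connection in local coordinates: its Christoffel symbols, viewed
as assigning to a point and two tangent vectors a tangent vector. -/
abbrev Conn (n : ℕ) := Pt n → Pt n → Pt n → Pt n

/-- A `(0,2)`-tensor field in local coordinates. -/
abbrev T02 (n : ℕ) := Pt n → Pt n → Pt n → ℝ

/-- A one-form in local coordinates. -/
abbrev OneF (n : ℕ) := Pt n → Pt n → ℝ

/-- Smoothness of a connection on a set (componentwise). -/
def ConnSmoothOn {n : ℕ} (Γ : Conn n) (s : Set (Pt n)) : Prop :=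
  ∀ u v, ContDiffOn ℝ (⊤ : ℕ∞) (fun x => Γ x u v) s

/-- A connection, given on `s`, admits a smooth extension to `t`. -/
def ConnExt {n : ℕ} (Γ : Conn n) (s t : Set (Pt n)) : Prop :=
  ∃ Γ' : Conn n, ConnSmoothOn Γ' t ∧ ∀ x ∈ s, ∀ u v, Γ' x u v = Γ x u v

/-- The projective modification `∇ + Υ` of a connection:
`(∇+Υ)_ξ η = ∇_ξ η + Υ(ξ)η + Υ(η)ξ`. -/
def projMod {n : ℕ} (Γ : Conn n) (Υ : OneF n) : Conn n :=
  fun x u v => Γ x u v + Υ x u • v + Υ x v • u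

/-- The differential of a function, as a one-form. -/
def df {n : ℕ} (ρ : Pt n → ℝ) : OneF n := fun x u => fderiv ℝ ρ x u

/-- A local defining function `ρ : U → [0,∞)` for the boundary. -/
structure IsDefining {n : ℕ} (B : MfldBdry n) (U : Set (Pt n)) (ρ : Pt n → ℝ) : Prop where
  open_U : IsOpen U
  smooth : ContDiffOn ℝ (⊤ : ℕ∞) ρ U
  nonneg : ∀ x ∈ U ∩ B.Mbar, 0 ≤ ρ x
  zero_iff : ∀ x ∈ U ∩ B.Mbar, (ρ x = 0 ↔ x ∈ B.Bd)
  dne : ∀ x ∈ U ∩ B.Bd, fderiv ℝ ρ x ≠ 0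

/-- `Γ` (a connection on the interior `M`) is projectively compact of order `α`:
near each boundary point there is a local defining function `ρ` such that the
projective modification `∇ + dρ/(αρ)` extends smoothly to the boundary. -/
def ProjCompact {n : ℕ} (B : MfldBdry n) (Γ : Conn n) (α : ℝ) : Prop :=
  ∀ x ∈ B.Bd, ∃ U ρ, x ∈ U ∧ IsDefining B U ρ ∧
    ConnExt (projMod Γ (fun y u => (α * ρ y)⁻¹ * df ρ y u)) (U ∩ B.Mint) (U ∩ B.Mbar)

/-- A pseudo-Riemannian metric on the interior `M`. -/
structure IsPseudoMetric {n : ℕ} (B : MfldBdry n) (g : T02 n) : Prop where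
  symm : ∀ x ∈ B.Mint, ∀ u v, g x u v = g x v u
  smooth : ∀ u v, ContDiffOn ℝ (⊤ : ℕ∞) (fun x => g x u v) B.Mint
  nondeg : ∀ x ∈ B.Mint, ∀ u, u ≠ 0 → ∃ v, g x u v ≠ 0

/-- `Γ` is the Levi-Civita connection of `g` on the interior. -/
structure IsLeviCivita {n : ℕ} (B : MfldBdry n) (g : T02 n) (Γ : Conn n) : Prop where
  torsion_free : ∀ x ∈ B.Mint, ∀ u v, Γ x u v = Γ x v u
  metric : ∀ x ∈ B.Mint, ∀ u v w,
    fderiv ℝ (fun y => g y u v) x w = g x (Γ x w u) v + g x u (Γ x w v)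

/-- Curvature tensor `R(u,v)w = R_{ab}{}^c{}_d u^a v^b w^d` of a connection. -/
def riem {n : ℕ} (Γ : Conn n) : Pt n → Pt n → Pt n → Pt n → Pt n :=
  fun x u v w =>
    fderiv ℝ (fun y => Γ y v w) x u - fderiv ℝ (fun y => Γ y u w) x v
      + Γ x u (Γ x v w) - Γ x v (Γ x u w)

/-- The Ricci curvature `R_{bd} = R_{ab}{}^a{}_d`. -/
def ricci {n : ℕ} (Γ : Conn n) : T02 n :=
  fun x v w => ∑ i, (riem Γ x (eb n i) v w) i

/-- The projective Schouten tensor `P_{ab} = (1/n) R_{ab}` of a connection on an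
`(n+1)`-dimensional manifold. -/
def schouten (n : ℕ) (Γ : Conn n) : T02 n :=
  fun x u v => (n : ℝ)⁻¹ * ricci Γ x u v

/-- `ginv` is the inverse `g^{ab}` of the metric `g_{ab}` on the interior. -/
def IsInvMetric {n : ℕ} (B : MfldBdry n) (g ginv : T02 n) : Prop :=
  ∀ x ∈ B.Mint, ∀ i j,
    (∑ k, g x (eb n i) (eb n k) * ginv x (eb n k) (eb n j))
      = if i = j then (1 : ℝ) else 0

/-- Scalar curvature `S = g^{ab} R_{ab}`. -/
def scalCurv {n : ℕ} (Γ : Conn n) (ginv : T02 n) : Pt n → ℝ :=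
  fun x => ∑ i, ∑ j, ginv x (eb n i) (eb n j) * ricci Γ x (eb n i) (eb n j)

/-- The trace `g^{ij} P_{ij}` of the Schouten tensor. -/
def trP (n : ℕ) (Γ : Conn n) (ginv : T02 n) : Pt n → ℝ :=
  fun x => ∑ i, ∑ j, ginv x (eb n i) (eb n j) * schouten n Γ x (eb n i) (eb n j)

/-- The nowhere vanishing projective density `τ ∈ Γ(ℰ(2))` determined by the
volume density of `g`, trivialized in local coordinates
(it satisfies `τ^{n+2} = det (g^{ab})`). -/
def tauOf (n : ℕ) (g : T02 n) : Pt n → ℝ :=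
  fun x => |(Matrix.of fun i j => g x (eb n i) (eb n j)).det| ^ (-(1 : ℝ) / ((n : ℝ) + 2))

/-- The covariant Hessian `∇_a ρ_b` of a function w.r.t. a connection. -/
def hess {n : ℕ} (Γ : Conn n) (ρ : Pt n → ℝ) : T02 n :=
  fun x u v => fderiv ℝ (fun y => fderiv ℝ ρ y v) x u - fderiv ℝ ρ x (Γ x u v)

/-- The covariant derivative `∇_a T_{bc}` of a `(0,2)`-tensor. -/
def covD2 {n : ℕ} (Γ : Conn n) (T : T02 n) : Pt n → Pt n → Pt n → Pt n → ℝ :=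
  fun x a u v => fderiv ℝ (fun y => T y u v) x a - T x (Γ x a u) v - T x u (Γ x a v)

/-- The covariant derivative of a `(1,2)`-tensor (vector valued 2-tensor). -/
def covD12 {n : ℕ} (Γ : Conn n) (T : Pt n → Pt n → Pt n → Pt n) :
    Pt n → Pt n → Pt n → Pt n → Pt n :=
  fun x a u v => fderiv ℝ (fun y => T y u v) x a + Γ x a (T x u v)
    - T x (Γ x a u) v - T x u (Γ x a v)

/-- The trace `Γ_{ad}{}^d` of the Christoffel symbols. -/
def trConn {n : ℕ} (Γ : Conn n) : OneF n := fun x u => ∑ i, (Γ x u (eb n i)) i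

/-- The gradient covector `ρ_a = dρ`, realized as a vector of components. -/
def gradV {n : ℕ} (ρ : Pt n → ℝ) (x : Pt n) : Pt n :=
  ∑ i, fderiv ℝ ρ x (eb n i) • eb n i

/-- The Euclidean component pairing of a vector with a covector (both realized
as component tuples). -/
def pairV {n : ℕ} (v w : Pt n) : ℝ := ∑ i, v i * w i

/-- Raising an index with `P^{ab}` (the inverse Schouten tensor):
`(raiseCov P⁻¹ x ω)^a = P^{ab} ω_b`. -/
def raiseCov {n : ℕ} (Pinv : T02 n) (x : Pt n) (ω : Pt n → ℝ) : Pt n :=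
  ∑ i, (∑ j, Pinv x (eb n i) (eb n j) * ω (eb n j)) • eb n i

/-- A standard projective tractor `(ν^a, σ)` in the splitting of a chosen
connection in the projective class. -/
abbrev Trac (n : ℕ) := Pt n × ℝ

/-- The standard projective tractor connection in the splitting of a connection
`Γ` with Schouten tensor `P`, differentiating within the set `s`:
`∇^𝒯_a (ν^b, σ) = (∇_a ν^b + σ δ_a^b, ∇_a σ - P_{ab} ν^b)`, where the density
weight `-1` of both slots contributes the terms involving `trConn`. -/
def tracD {n : ℕ} (Γ : Conn n) (P : T02 n) (s : Set (Pt n))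
    (t : Pt n → Trac n) (x u : Pt n) : Trac n :=
  (fderivWithin ℝ (fun y => (t y).1) s x u + Γ x u (t x).1
      - (((n : ℝ) + 2)⁻¹ * trConn Γ x u) • (t x).1 + (t x).2 • u,
   fderivWithin ℝ (fun y => (t y).2) s x u
      - ((n : ℝ) + 2)⁻¹ * trConn Γ x u * (t x).2 - P x u (t x).1)

/-- The curvature of a connection-type operator `D` on tractors, as a
fibrewise two-form with values in endomorphisms (computed on constant
sections, which yields the curvature tensor for any affine operator `D`). -/
def curvOf {n : ℕ} (D : (Pt n → Trac n) → Pt n → Pt n → Trac n)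
    (x u v : Pt n) (t : Trac n) : Trac n :=
  D (fun y => D (fun _ => t) y v) x u - D (fun y => D (fun _ => t) y u) x v

/-- The zeroth-order part of the tractor connection (its action on the value of
a section; used to define induced connections on tractor tensor bundles). -/
def tracA {n : ℕ} (Γ : Conn n) (P : T02 n) (x u : Pt n) (t : Trac n) : Trac n :=
  (Γ x u t.1 - (((n : ℝ) + 2)⁻¹ * trConn Γ x u) • t.1 + t.2 • u,
   -(((n : ℝ) + 2)⁻¹ * trConn Γ x u * t.2) - P x u t.1)

/-- The induced tractor covariant derivative on bundle metrics on `𝒯`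
(sections of `S²𝒯*`). -/
def covDForm {n : ℕ} (Γ : Conn n) (P : T02 n)
    (Φ : Pt n → Trac n → Trac n → ℝ) (x u : Pt n) (t₁ t₂ : Trac n) : ℝ :=
  fderiv ℝ (fun y => Φ y t₁ t₂) x u - Φ x (tracA Γ P x u t₁) t₂
    - Φ x t₁ (tracA Γ P x u t₂)

/-- The transversal vector field `t^a = -(1/(4ρ²)) P^{ab} ρ_b`. -/
def tvecOf {n : ℕ} (Γ : Conn n) (Pinv : T02 n) (ρ : Pt n → ℝ) (x : Pt n) : Pt n :=
  (-(4 * ρ x ^ 2)⁻¹) • raiseCov Pinv x (fun w => df ρ x w)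

/-- The contorsion tensor
`A_a{}^b{}_c = (1/2) P^{bd} (-∇_a P_{dc} - ∇_c P_{da} + ∇_d P_{ac})`. -/
def Atens {n : ℕ} (Γ : Conn n) (Pinv : T02 n) (x u w : Pt n) : Pt n :=
  (2 : ℝ)⁻¹ • ∑ i, (∑ j, Pinv x (eb n i) (eb n j) *
      (- covD2 Γ (schouten n Γ) x u (eb n j) w
        - covD2 Γ (schouten n Γ) x w (eb n j) u
        + covD2 Γ (schouten n Γ) x (eb n j) u w)) • eb n i

/-- The tensor `ψ_{ac} = t^d ρ (-∇_a P_{dc} - ∇_c P_{da} + ∇_d P_{ac})`. -/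
def psiA {n : ℕ} (Γ : Conn n) (Pinv : T02 n) (ρ : Pt n → ℝ) (x u w : Pt n) : ℝ :=
  ρ x * (- covD2 Γ (schouten n Γ) x u (tvecOf Γ Pinv ρ x) w
         - covD2 Γ (schouten n Γ) x w (tvecOf Γ Pinv ρ x) u
         + covD2 Γ (schouten n Γ) x (tvecOf Γ Pinv ρ x) u w)

/-- The projective Weyl curvature of a connection,
`C_{ab}{}^c{}_d = R_{ab}{}^c{}_d - δ^c_a P_{bd} + δ^c_b P_{ad} - β_{ab} δ^c_d`. -/
def WeylC {n : ℕ} (Γ : Conn n) (x u v w : Pt n) : Pt n :=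
  riem Γ x u v w - schouten n Γ x v w • u + schouten n Γ x u w • v
    - (schouten n Γ x v u - schouten n Γ x u v) • w

/-- The projective Cotton tensor `Y_{abc} = ∇_a P_{bc} - ∇_b P_{ac}`. -/
def CottonC {n : ℕ} (Γ : Conn n) (x u v w : Pt n) : ℝ :=
  covD2 Γ (schouten n Γ) x u v w - covD2 Γ (schouten n Γ) x v u w


/-!
Both parts are pointwise computations on `ker dρ`. Changing the connection by `Υ` changes
`∇_a ρ_b` by `-Υ_a ρ_b - Υ_b ρ_a`, and the Leibniz rule gives
`∇_a (e^f ρ)_b = e^f ∇_a ρ_b + ρ ∇_a (e^f)_b + (e^f)_a ρ_b + (e^f)_b ρ_a`.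
On `T∂M × T∂M` every term carrying a factor `ρ_a` or `ρ_b` drops out, and `ρ = 0` on `∂M`.
-/

section Hessian

open Topology

variable {n : ℕ}

theorem hess_projMod (Γ : Conn n) (Υ : OneF n) (ρ : Pt n → ℝ) (x u v : Pt n) :
    hess (projMod Γ Υ) ρ x u v = hess Γ ρ x u v - Υ x u * df ρ x v - Υ x v * df ρ x u := by
  simp only [hess, projMod, df, map_add, map_smul, smul_eq_mul]
  ring

theorem ContDiffAt.differentiableAt_fderiv_apply {g : Pt n → ℝ} {x : Pt n}
    (hg : ContDiffAt ℝ 2 g x) (v : Pt n) :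
    DifferentiableAt ℝ (fun y => fderiv ℝ g y v) x :=
  ((hg.fderiv_right le_rfl).differentiableAt one_ne_zero).clm_apply (differentiableAt_const v)

theorem hess_mul (Γ : Conn n) {g ρ : Pt n → ℝ} {x : Pt n}
    (hg : ContDiffAt ℝ 2 g x) (hρ : ContDiffAt ℝ 2 ρ x) (u v : Pt n) :
    hess Γ (fun y => g y * ρ y) x u v
      = g x * hess Γ ρ x u v + ρ x * hess Γ g x u v
        + df g x u * df ρ x v + df g x v * df ρ x u := by
  have hdiff : ∀ᶠ y in 𝓝 x, DifferentiableAt ℝ g y ∧ DifferentiableAt ℝ ρ y := by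
    filter_upwards [hg.eventually (by simp), hρ.eventually (by simp)] with y hgy hρy
    exact ⟨hgy.differentiableAt two_ne_zero, hρy.differentiableAt two_ne_zero⟩
  have hleibniz : ∀ y, DifferentiableAt ℝ g y → DifferentiableAt ℝ ρ y → ∀ w,
      fderiv ℝ (fun z => g z * ρ z) y w = g y * fderiv ℝ ρ y w + ρ y * fderiv ℝ g y w := by
    intro y hgy hρy w
    simp only [fderiv_fun_mul hgy hρy, add_apply, smul_apply, smul_eq_mul]
  have hfirst : (fun y => fderiv ℝ (fun z => g z * ρ z) y v)
      =ᶠ[𝓝 x] fun y => g y * fderiv ℝ ρ y v + ρ y * fderiv ℝ g y v := by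
    filter_upwards [hdiff] with y hy using hleibniz y hy.1 hy.2 v
  have hgx := hg.differentiableAt two_ne_zero
  have hρx := hρ.differentiableAt two_ne_zero
  have hdg := hg.differentiableAt_fderiv_apply v
  have hdρ := hρ.differentiableAt_fderiv_apply v
  simp only [hess, df, hfirst.fderiv_eq, hleibniz x hgx hρx]
  rw [fderiv_fun_add (hgx.fun_mul hdρ) (hρx.fun_mul hdg), fderiv_fun_mul hgx hdρ,
    fderiv_fun_mul hρx hdg]
  simp only [add_apply, smul_apply, smul_eq_mul]
  ring

end Hessian

namespace IsDefining

variable {n : ℕ} {B : MfldBdry n} {U : Set (Pt n)} {ρ : Pt n → ℝ}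

theorem eq_zero_of_mem_bd (hρ : IsDefining B U ρ) {x : Pt n} (hx : x ∈ U ∩ B.Bd) : ρ x = 0 :=
  (hρ.zero_iff x ⟨hx.1, B.union_eq ▸ Or.inr hx.2⟩).2 hx.2

end IsDefining

theorem statement_7_general {n : ℕ} (B : MfldBdry n)
    (U : Set (Pt n)) (ρ : Pt n → ℝ) (hρ : IsDefining B U ρ)
    (Γhat : Conn n) (Υ : OneF n) (f : Pt n → ℝ) (hf : ContDiffOn ℝ (⊤ : ℕ∞) f U) :
    (∀ x ∈ U ∩ B.Bd, ∀ u v, df ρ x u = 0 → df ρ x v = 0 →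
      hess (projMod Γhat Υ) ρ x u v = hess Γhat ρ x u v) ∧
    (∀ x ∈ U ∩ B.Bd, ∀ u v, df ρ x u = 0 → df ρ x v = 0 →
      hess Γhat (fun y => Real.exp (f y) * ρ y) x u v
        = Real.exp (f x) * hess Γhat ρ x u v) := by
  refine ⟨fun x _ u v hu hv => ?_, fun x hx u v hu hv => ?_⟩
  · rw [hess_projMod, hu, hv]
    ring
  · have hU : U ∈ nhds x := hρ.open_U.mem_nhds hx.1
    have hρ2 : ContDiffAt ℝ 2 ρ x :=
      (hρ.smooth.contDiffAt hU).of_le (WithTop.coe_le_coe.mpr le_top)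
    have hexp : ContDiffAt ℝ 2 (fun y => Real.exp (f y)) x :=
      ((hf.contDiffAt hU).of_le (WithTop.coe_le_coe.mpr le_top)).exp
    rw [hess_mul Γhat hexp hρ2, hρ.eq_zero_of_mem_bd hx, hu, hv]
    ring

/-- well-definedness of the projective second fundamental
form, Section 3.1.  Let `∇̂` be a connection which is smooth up to the
boundary and `ρ` a local defining function.  (a) For any projectively
equivalent connection `∇̃ = ∇̂ + Υ`, the restrictions of `∇̂_a ρ_b` and
`∇̃_a ρ_b` to `T∂M × T∂M` coincide.  (b) For any other defining function
`ρ̃ = e^f ρ`, the restriction of `∇̂_a ρ̃_b` to `T∂M × T∂M` is `e^f` times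
that of `∇̂_a ρ_b`, hence conformal to it.  Consequently the conformal class
of the restriction of `∇̂_a ρ_b` to `T∂M` (the projective second fundamental
form) depends only on the projective structure on `M̄`. -/
theorem statement_7 {n : ℕ} (B : MfldBdry n)
    (U : Set (Pt n)) (ρ : Pt n → ℝ) (hρ : IsDefining B U ρ)
    (Γhat : Conn n) (hΓs : ConnSmoothOn Γhat (U ∩ B.Mbar))
    (Υ : OneF n) (f : Pt n → ℝ) (hf : ContDiffOn ℝ (⊤ : ℕ∞) f U) :
    (∀ x ∈ U ∩ B.Bd, ∀ u v, df ρ x u = 0 → df ρ x v = 0 →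
      hess (projMod Γhat Υ) ρ x u v = hess Γhat ρ x u v) ∧
    (∀ x ∈ U ∩ B.Bd, ∀ u v, df ρ x u = 0 → df ρ x v = 0 →
      hess Γhat (fun y => Real.exp (f y) * ρ y) x u v
        = Real.exp (f x) * hess Γhat ρ x u v) :=
  statement_7_general B U ρ hρ Γhat Υ f hf
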